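/- Minimal-set property: for any intuitionistic Kripke model M = ⟨W,R,V⟩ in which R is well-founded (every nonempty subset of W contains an R-minimal element), any team t, and any formula φ of L: M,t ⊨ φ if and only if M,min(t) ⊨ φ, where min(t) = {w ∈ t | for all v ∈ t, vRw implies v = w}. -/

import Mathlib

/-- Formulas of the language L: atoms, ⊥, ∧, ∨, →, and inquisitive disjunction ⩾. -/
inductive Formula (P : Type) : Type
  | atom : P → Formula P
  | bot  : Formula P
  | and  : Formula P → Formula P → Formula P
  | or   : Formula P → Formula P → Formula P
  | impl : Formula P → Formula P → Formula P
  | iorr : Formula P → Formula P → Formula P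

namespace Formula

/-- Negation ¬φ := φ → ⊥. -/
def neg {P : Type} (φ : Formula P) : Formula P := Formula.impl φ Formula.bot

/-- Polar question ?φ := φ ⩾ ¬φ. -/
def question {P : Type} (φ : Formula P) : Formula P := Formula.iorr φ φ.neg

/-- A standard formula contains no occurrence of inquisitive disjunction ⩾. -/
def standard {P : Type} : Formula P → Prop
  | atom _ => True
  | bot => True
  | and φ ψ => φ.standard ∧ ψ.standard
  | or φ ψ => φ.standard ∧ ψ.standard
  | impl φ ψ => φ.standard ∧ ψ.standard
  | iorr _ _ => False

end Formula

/-- An intuitionistic Kripke model: a partially ordered set of worlds with a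
persistent valuation. -/
structure KripkeModel (P : Type) where
  W : Type
  R : W → W → Prop
  refl : ∀ w, R w w
  antisymm : ∀ w v, R w v → R v w → w = v
  trans : ∀ w v u, R w v → R v u → R w u
  V : W → P → Prop
  persistent : ∀ w v p, R w v → V w p → V v p

/-- R[t], the up-set generated by a team t. -/
def KripkeModel.upset {P : Type} (M : KripkeModel P) (t : Set M.W) : Set M.W :=
  {v | ∃ w ∈ t, M.R w v}

/-- The support relation M,t ⊨ φ between teams and formulas. -/
def support {P : Type} (M : KripkeModel P) : Formula P → Set M.W → Prop
  | .atom p, t => ∀ w ∈ t, M.V w p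
  | .bot, t => t = ∅
  | .and φ ψ, t => support M φ t ∧ support M ψ t
  | .or φ ψ, t => ∃ t₁ t₂, t = t₁ ∪ t₂ ∧ support M φ t₁ ∧ support M ψ t₂
  | .impl φ ψ, t => ∀ t', t' ⊆ M.upset t → support M φ t' → support M ψ t'
  | .iorr φ ψ, t => support M φ t ∨ support M ψ t

/-- Truth at a world: M,w ⊨ φ iff M,{w} ⊨ φ. -/
def truth {P : Type} (M : KripkeModel P) (w : M.W) (φ : Formula P) : Prop :=
  support M φ {w}

/-- A formula is truth-conditional if support at a team amounts to truth at each world. -/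
def truthConditional {P : Type} (φ : Formula P) : Prop :=
  ∀ (M : KripkeModel P) (t : Set M.W), support M φ t ↔ ∀ w ∈ t, truth M w φ

/-- The partial truth-value function: `tvalIs M w φ b` says T(w,φ) is defined with value b
(b = true for value 1, i.e. M,w ⊨ φ; b = false for value 0, i.e. M,w ⊨ ¬φ). -/
def tvalIs {P : Type} (M : KripkeModel P) (w : M.W) (φ : Formula P) : Bool → Prop
  | true => truth M w φ
  | false => truth M w φ.neg

/-! Every world of a team lies above one of its minimal worlds, so `min t` generates the same
up-set as `t`. This settles implication, and atoms follow by persistence. For a split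
`min t = t₁ ∪ t₂`, the team `t` splits as `(t ∩ R[t₁]) ∪ (t ∩ R[t₂])`, whose parts have
minimal sets exactly `t₁` and `t₂`; induction on the formula does the rest. -/

namespace KripkeModel

variable {P : Type} (M : KripkeModel P)

def minimals (t : Set M.W) : Set M.W :=
  {w | w ∈ t ∧ ∀ v ∈ t, M.R v w → v = w}

theorem minimals_subset (t : Set M.W) : M.minimals t ⊆ t :=
  fun _ hw => hw.1

theorem upset_mono {s t : Set M.W} (h : s ⊆ t) : M.upset s ⊆ M.upset t := by
  rintro v ⟨w, hw, hwv⟩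
  exact ⟨w, h hw, hwv⟩

theorem upset_union (s t : Set M.W) : M.upset (s ∪ t) = M.upset s ∪ M.upset t := by
  ext v
  simp only [upset, Set.mem_union, Set.mem_ofPred_eq, or_and_right, exists_or]

theorem subset_upset (t : Set M.W) : t ⊆ M.upset t :=
  fun w hw => ⟨w, hw, M.refl w⟩

theorem minimals_inter_upset {t s : Set M.W} (hs : s ⊆ M.minimals t) :
    M.minimals (t ∩ M.upset s) = s := by
  ext w
  constructor
  · rintro ⟨⟨-, m, hm, hmw⟩, hmin⟩
    have hm_mem : m ∈ t ∩ M.upset s := ⟨(hs hm).1, M.subset_upset s hm⟩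
    rwa [← hmin m hm_mem hmw]
  · intro hw
    exact ⟨⟨(hs hw).1, M.subset_upset s hw⟩, fun v hv => (hs hw).2 v hv.1⟩

def HasMinimalElements : Prop :=
  ∀ s : Set M.W, s.Nonempty → ∃ w ∈ s, ∀ v ∈ s, M.R v w → v = w

section HasMinimalElements

variable {M}

theorem exists_mem_minimals_R (hwf : M.HasMinimalElements) {t : Set M.W} {w : M.W}
    (hw : w ∈ t) : ∃ m ∈ M.minimals t, M.R m w := by
  obtain ⟨m, ⟨hmt, hmw⟩, hmin⟩ := hwf {v | v ∈ t ∧ M.R v w} ⟨w, hw, M.refl w⟩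
  exact ⟨m, ⟨hmt, fun v hv hvm => hmin v ⟨hv, M.trans v m w hvm hmw⟩ hvm⟩, hmw⟩

theorem subset_upset_minimals (hwf : M.HasMinimalElements) (t : Set M.W) :
    t ⊆ M.upset (M.minimals t) :=
  fun _ hw => exists_mem_minimals_R hwf hw

theorem upset_minimals (hwf : M.HasMinimalElements) (t : Set M.W) :
    M.upset (M.minimals t) = M.upset t := by
  refine (M.upset_mono (M.minimals_subset t)).antisymm ?_
  rintro v ⟨w, hw, hwv⟩
  obtain ⟨m, hm, hmw⟩ := exists_mem_minimals_R hwf hw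
  exact ⟨m, hm, M.trans m w v hmw hwv⟩

theorem minimals_eq_empty (hwf : M.HasMinimalElements) {t : Set M.W} :
    M.minimals t = ∅ ↔ t = ∅ := by
  refine ⟨fun h => Set.eq_empty_of_forall_notMem fun w hw => ?_, fun h => ?_⟩
  · obtain ⟨m, hm, -⟩ := exists_mem_minimals_R hwf hw
    simp [h] at hm
  · exact Set.subset_empty_iff.mp (h ▸ M.minimals_subset t)

theorem eq_inter_upset_union_of_minimals_eq (hwf : M.HasMinimalElements)
    {t t₁ t₂ : Set M.W} (h : M.minimals t = t₁ ∪ t₂) :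
    t = (t ∩ M.upset t₁) ∪ (t ∩ M.upset t₂) := by
  rw [← Set.inter_union_distrib_left, ← upset_union, ← h, Set.left_eq_inter]
  exact subset_upset_minimals hwf t

end HasMinimalElements

end KripkeModel

open KripkeModel

theorem support_of_subset {P : Type} {M : KripkeModel P} (φ : Formula P) {s t : Set M.W}
    (hst : s ⊆ t) (ht : support M φ t) : support M φ s := by
  induction φ generalizing s t with
  | atom p => exact fun w hw => ht w (hst hw)
  | bot => exact Set.subset_empty_iff.mp (ht ▸ hst)
  | and φ ψ ihφ ihψ => exact ⟨ihφ hst ht.1, ihψ hst ht.2⟩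
  | or φ ψ ihφ ihψ =>
    obtain ⟨t₁, t₂, rfl, h₁, h₂⟩ := ht
    refine ⟨s ∩ t₁, s ∩ t₂, ?_, ihφ Set.inter_subset_right h₁, ihψ Set.inter_subset_right h₂⟩
    rw [← Set.inter_union_distrib_left, Set.inter_eq_left.mpr hst]
  | impl φ ψ _ _ => exact fun t' ht' => ht t' (ht'.trans (M.upset_mono hst))
  | iorr φ ψ ihφ ihψ => exact ht.imp (ihφ hst) (ihψ hst)

/-- minimal-set property for well-founded R. -/
theorem minimal_set_property {P : Type} (M : KripkeModel P)
    (hwf : ∀ s : Set M.W, s.Nonempty → ∃ w ∈ s, ∀ v ∈ s, M.R v w → v = w)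
    (t : Set M.W) (φ : Formula P) :
    support M φ t ↔ support M φ {w | w ∈ t ∧ ∀ v ∈ t, M.R v w → v = w} := by
  change support M φ t ↔ support M φ (M.minimals t)
  induction φ generalizing t with
  | atom p =>
    refine ⟨support_of_subset _ (M.minimals_subset t), fun h w hw => ?_⟩
    obtain ⟨m, hm, hmw⟩ := exists_mem_minimals_R hwf hw
    exact M.persistent m w p hmw (h m hm)
  | bot => exact (minimals_eq_empty hwf).symm
  | and φ ψ ihφ ihψ => exact and_congr (ihφ t) (ihψ t)
  | or φ ψ ihφ ihψ =>
    refine ⟨support_of_subset _ (M.minimals_subset t), ?_⟩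
    rintro ⟨t₁, t₂, h, h₁, h₂⟩
    refine ⟨_, _, eq_inter_upset_union_of_minimals_eq hwf h, ?_, ?_⟩
    · rwa [ihφ, M.minimals_inter_upset (h ▸ Set.subset_union_left)]
    · rwa [ihψ, M.minimals_inter_upset (h ▸ Set.subset_union_right)]
  | impl φ ψ _ _ =>
    change (∀ t', _ → _) ↔ (∀ t', _ → _)
    rw [upset_minimals hwf]
  | iorr φ ψ ihφ ihψ => exact or_congr (ihφ t) (ihψ t)
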